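/- arXiv:1910.00043 — 4 statements merged into one kernel-verified Lean document; each statement's English description precedes it below -/
import Mathlib

section
/- For all real numbers a, b > 1, the beta function satisfies beta(a,b) ≥ exp(2 - a - b). -/
/-!
Write the integrand on `(0, 1)` as `exp ((a - 1) log t + (b - 1) log (1 - t))` and apply Jensen's
inequality for `exp` with respect to the uniform probability measure on `[0, 1]`: since
`∫₀¹ log t = ∫₀¹ log (1 - t) = -1`, the exponent averages to `2 - a - b`.
-/

open MeasureTheory Set Real intervalIntegral

lemma exp_integral_le_integral_exp {α : Type*} [MeasurableSpace α] {μ : Measure α}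
    [IsProbabilityMeasure μ] {f : α → ℝ} (hf : Integrable f μ)
    (hexp : Integrable (fun x ↦ exp (f x)) μ) :
    exp (∫ x, f x ∂μ) ≤ ∫ x, exp (f x) ∂μ :=
  convexOn_exp.map_integral_le continuous_exp.continuousOn isClosed_univ
    (.of_forall fun _ ↦ mem_univ _) hf hexp

lemma exp_intervalIntegral_le_intervalIntegral_exp_zero_one {f : ℝ → ℝ}
    (hf : IntervalIntegrable f volume 0 1)
    (hexp : IntervalIntegrable (fun x ↦ exp (f x)) volume 0 1) :
    exp (∫ x in (0:ℝ)..1, f x) ≤ ∫ x in (0:ℝ)..1, exp (f x) := by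
  have : IsProbabilityMeasure (volume.restrict (Ioc (0:ℝ) 1)) := ⟨by simp⟩
  simp only [integral_of_le zero_le_one]
  exact exp_integral_le_integral_exp hf.1 hexp.1

lemma intervalIntegrable_log_one_sub : IntervalIntegrable (fun t ↦ log (1 - t)) volume 0 1 := by
  simpa using (intervalIntegrable_log' (a := 0) (b := 1)).comp_sub_left 1 |>.symm

lemma intervalIntegrable_mul_log_add_mul_log_one_sub (a b : ℝ) :
    IntervalIntegrable (fun t ↦ (a - 1) * log t + (b - 1) * log (1 - t)) volume 0 1 :=
  (intervalIntegrable_log'.const_mul _).add (intervalIntegrable_log_one_sub.const_mul _)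

lemma integral_mul_log_add_mul_log_one_sub (a b : ℝ) :
    ∫ t in (0:ℝ)..1, ((a - 1) * log t + (b - 1) * log (1 - t)) = 2 - a - b := by
  rw [integral_add (intervalIntegrable_log'.const_mul _)
    (intervalIntegrable_log_one_sub.const_mul _), intervalIntegral.integral_const_mul,
    intervalIntegral.integral_const_mul]
  norm_num
  ring

lemma exp_mul_log_add_mul_log_one_sub (a b : ℝ) {t : ℝ} (ht : t ∈ Ioo (0:ℝ) 1) :
    exp ((a - 1) * log t + (b - 1) * log (1 - t)) = t ^ (a - 1) * (1 - t) ^ (b - 1) := by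
  rw [exp_add, rpow_def_of_pos ht.1, rpow_def_of_pos (sub_pos.2 ht.2), mul_comm (log t),
    mul_comm (log (1 - t))]

theorem beta_lower_bound (a b : ℝ) (ha : 1 < a) (hb : 1 < b) :
    Real.exp (2 - a - b) ≤ ∫ t in (0:ℝ)..1, t ^ (a - 1) * (1 - t) ^ (b - 1) := by
  have hbeta : Continuous fun t : ℝ ↦ t ^ (a - 1) * (1 - t) ^ (b - 1) := by
    have h1 : Continuous fun t : ℝ ↦ t ^ (a - 1) := continuous_rpow_const (by linarith)
    have h2 : Continuous fun t : ℝ ↦ t ^ (b - 1) := continuous_rpow_const (by linarith)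
    exact h1.mul (h2.comp (continuous_const.sub continuous_id))
  have heq : EqOn (fun t ↦ exp ((a - 1) * log t + (b - 1) * log (1 - t)))
      (fun t ↦ t ^ (a - 1) * (1 - t) ^ (b - 1)) (uIoo 0 1) := fun t ht ↦ by
    rw [uIoo_of_le zero_le_one] at ht
    exact exp_mul_log_add_mul_log_one_sub a b ht
  rw [← integral_mul_log_add_mul_log_one_sub a b, ← integral_congr_uIoo heq]
  exact exp_intervalIntegral_le_intervalIntegral_exp_zero_one
    (intervalIntegrable_mul_log_add_mul_log_one_sub a b)
    ((hbeta.intervalIntegrable 0 1).congr_uIoo heq.symm)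
end

section
/- For all real numbers a, b > 1, the beta function satisfies beta(a,b) ≤ (a + b - 1) / ((2a - 1)(2b - 1)). -/
/-!
Apply `x y ≤ (x² + y²) / 2` pointwise to `x = t ^ (a - 1)`, `y = (1 - t) ^ (b - 1)` and integrate:
the two squares integrate to `1 / (2a - 1)` and `1 / (2b - 1)`, whose mean is the stated bound.
This works as soon as `a, b > 1/2`, where the squares are integrable on `[0, 1]`.
-/

open Real intervalIntegral MeasureTheory

theorem integral_rpow_zero_one {r : ℝ} (hr : -1 < r) : ∫ t in (0 : ℝ)..1, t ^ r = 1 / (r + 1) := by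
  rw [integral_rpow (Or.inl hr), one_rpow, zero_rpow (by linarith), sub_zero]

theorem integral_one_sub_rpow_zero_one {r : ℝ} (hr : -1 < r) :
    ∫ t in (0 : ℝ)..1, (1 - t) ^ r = 1 / (r + 1) := by
  rw [integral_comp_sub_left (fun t => t ^ r), sub_self, sub_zero, integral_rpow_zero_one hr]

theorem intervalIntegrable_one_sub_rpow {r : ℝ} (hr : -1 < r) :
    IntervalIntegrable (fun t => (1 - t) ^ r) volume 0 1 := by
  simpa using ((intervalIntegrable_rpow' hr (a := 0) (b := 1)).comp_sub_left 1).symm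

theorem rpow_mul_rpow_le_add_rpow_two_mul_div_two {x y : ℝ} (hx : 0 ≤ x) (hy : 0 ≤ y) (p q : ℝ) :
    x ^ p * y ^ q ≤ (x ^ (2 * p) + y ^ (2 * q)) / 2 := by
  rw [mul_comm 2 p, mul_comm 2 q, rpow_mul hx, rpow_mul hy, rpow_two, rpow_two]
  linarith [two_mul_le_add_sq (x ^ p) (y ^ q)]

theorem integral_rpow_mul_one_sub_rpow_le {a b : ℝ} (ha : 1 / 2 < a) (hb : 1 / 2 < b) :
    ∫ t in (0 : ℝ)..1, t ^ (a - 1) * (1 - t) ^ (b - 1) ≤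
      (1 / (2 * a - 1) + 1 / (2 * b - 1)) / 2 := by
  have hIa : IntervalIntegrable (fun t : ℝ => t ^ (2 * (a - 1))) volume 0 1 :=
    intervalIntegrable_rpow' (by linarith)
  have hIb := intervalIntegrable_one_sub_rpow (r := 2 * (b - 1)) (by linarith)
  have hbound := (hIa.add hIb).div_const 2
  have hle : ∀ t ∈ Set.Icc (0 : ℝ) 1,
      t ^ (a - 1) * (1 - t) ^ (b - 1) ≤ (t ^ (2 * (a - 1)) + (1 - t) ^ (2 * (b - 1))) / 2 :=
    fun t ht => rpow_mul_rpow_le_add_rpow_two_mul_div_two ht.1 (sub_nonneg.2 ht.2) _ _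
  have hI : IntervalIntegrable (fun t : ℝ => t ^ (a - 1) * (1 - t) ^ (b - 1)) volume 0 1 := by
    refine hbound.mono_fun' (by fun_prop) <|
      ae_restrict_of_forall_mem measurableSet_uIoc fun t ht => ?_
    have ht' : t ∈ Set.Icc (0 : ℝ) 1 := Set.Ioc_subset_Icc_self (by simpa using ht)
    have h0 : 0 ≤ t ^ (a - 1) * (1 - t) ^ (b - 1) :=
      mul_nonneg (rpow_nonneg ht'.1 _) (rpow_nonneg (sub_nonneg.2 ht'.2) _)
    simpa only [Real.norm_of_nonneg h0] using hle t ht'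
  calc _ ≤ ∫ t in (0 : ℝ)..1, (t ^ (2 * (a - 1)) + (1 - t) ^ (2 * (b - 1))) / 2 :=
        integral_mono_on zero_le_one hI hbound hle
    _ = _ := by
        rw [intervalIntegral.integral_div, integral_add hIa hIb,
          integral_rpow_zero_one (by linarith), integral_one_sub_rpow_zero_one (by linarith)]
        ring_nf

theorem beta_upper_bound (a b : ℝ) (ha : 1 < a) (hb : 1 < b) :
    (∫ t in (0:ℝ)..1, t ^ (a - 1) * (1 - t) ^ (b - 1)) ≤
      (a + b - 1) / ((2 * a - 1) * (2 * b - 1)) := by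
  refine (integral_rpow_mul_one_sub_rpow_le (by linarith) (by linarith)).trans_eq ?_
  have h2a : 2 * a - 1 ≠ 0 := by linarith
  have h2b : 2 * b - 1 ≠ 0 := by linarith
  field_simp
  ring
end

section
/- The function x ↦ Γ(x - a)/Γ(x - b) is strictly increasing on the interval where both arguments are positive, provided a < b. -/
/-!
Since `Γ(t + 1) = t Γ(t)`, we have `log Γ(t) = log Γ(t + 1) - log t`: a convex function plus a
strictly convex one, so `log Γ` is strictly convex on `(0, ∞)`. Forward differences
`t ↦ f(t + δ) - f(t)` of a strictly convex `f` are strictly increasing, and with `δ = b - a`,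
`t = x - b` this says that `log (Γ(x - a) / Γ(x - b))` is strictly increasing.
-/

open Set Real

theorem StrictConvexOn.strictMonoOn_forward_sub {𝕜 : Type*} [Field 𝕜] [LinearOrder 𝕜]
    [IsStrictOrderedRing 𝕜] {s : Set 𝕜} {f : 𝕜 → 𝕜} (hf : StrictConvexOn 𝕜 s f) {δ : 𝕜}
    (hδ : 0 < δ) : StrictMonoOn (fun t => f (t + δ) - f t) {t | t ∈ s ∧ t + δ ∈ s} := by
  rintro u ⟨hu, hu'⟩ v ⟨hv, hv'⟩ huv
  have hu_lt : u < u + δ := lt_add_of_pos_right u hδ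
  have hδu : u + δ < v + δ := add_lt_add_left huv δ
  have hu_v' : u < v + δ := hu_lt.trans hδu
  refine (div_lt_div_iff_of_pos_right hδ).1 ?_
  calc (f (u + δ) - f u) / δ = (f (u + δ) - f u) / (u + δ - u) := by rw [add_sub_cancel_left]
    _ < (f (v + δ) - f u) / (v + δ - u) :=
      hf.secant_strict_mono hu hu' hv' hu_lt.ne' hu_v'.ne' hδu
    _ = (f u - f (v + δ)) / (u - (v + δ)) := by rw [← neg_div_neg_eq, neg_sub, neg_sub]
    _ < (f v - f (v + δ)) / (v - (v + δ)) :=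
      hf.secant_strict_mono hv' hu hv hu_v'.ne (lt_add_of_pos_right v hδ).ne huv
    _ = (f (v + δ) - f v) / δ := by rw [← neg_div_neg_eq, neg_sub, neg_sub, add_sub_cancel_left]

theorem Real.strictConvexOn_log_Gamma : StrictConvexOn ℝ (Ioi 0) (log ∘ Gamma) := by
  have hshift : ConvexOn ℝ (Ioi 0) (fun t => log (Gamma (1 + t))) := by
    refine (convexOn_log_Gamma.translate_right 1).subset (fun t ht => ?_) (convex_Ioi 0)
    simp only [mem_preimage, mem_Ioi] at ht ⊢
    linarith
  refine (hshift.add_strictConvexOn strictConcaveOn_log_Ioi.neg).congr fun t ht => ?_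
  have ht : 0 < t := ht
  simp [add_comm 1 t, Gamma_add_one ht.ne', log_mul ht.ne' (Gamma_pos_of_pos ht).ne']

theorem gamma_ratio_strictMono (a b : ℝ) (hab : a < b) :
    StrictMonoOn (fun x : ℝ => Real.Gamma (x - a) / Real.Gamma (x - b))
      {x : ℝ | 0 < x - a ∧ 0 < x - b} := by
  rintro x ⟨hxa, hxb⟩ y ⟨hya, hyb⟩ hxy
  have hΓ : ∀ {t}, 0 < t → 0 < Gamma t := Gamma_pos_of_pos
  have hdiff := strictConvexOn_log_Gamma.strictMonoOn_forward_sub (sub_pos.2 hab)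
    (a := x - b) ⟨hxb, by simpa using hxa⟩ ⟨hyb, by simpa using hya⟩ (by linarith)
  simp only [Function.comp_apply, sub_add_sub_cancel] at hdiff
  refine (log_lt_log_iff (div_pos (hΓ hxa) (hΓ hxb)) (div_pos (hΓ hya) (hΓ hyb))).1 ?_
  rwa [log_div (hΓ hxa).ne' (hΓ hxb).ne', log_div (hΓ hya).ne' (hΓ hyb).ne']
end

section
/- For fixed x in the interior of the unit simplex, the function p ↦ ∏ᵢ xᵢ^{kpᵢ} / B(kp) (the Dirichlet density at x viewed as a function of the parameter p) is log-concave in p on the interior of the unit simplex, for any k > 0. -/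
/-- The multivariate beta function `B(α) = ∏ᵢ Γ(αᵢ) / Γ(∑ᵢ αᵢ)`. -/
noncomputable def multiBeta {n : ℕ} (α : Fin n → ℝ) : ℝ :=
  (∏ i, Real.Gamma (α i)) / Real.Gamma (∑ i, α i)

/-!
On the simplex `∑ pᵢ = 1` the density equals `Γ(k) ∏ᵢ xᵢ^{kpᵢ} / Γ(kpᵢ)`, so it suffices that each
factor `t ↦ xᵢ^t / Γ(t)` is log-concave on `(0, ∞)`. The numerator is log-linear in `t`, and the
denominator is log-convex (Bohr–Mollerup), which is the one-variable form of `ψ' > 0`.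
-/

open Real

theorem Real.Gamma_le_rpow_mul_rpow {a b θ : ℝ} (ha : 0 < a) (hb : 0 < b)
    (hθ0 : 0 ≤ θ) (hθ1 : θ ≤ 1) :
    Gamma (θ * a + (1 - θ) * b) ≤ Gamma a ^ θ * Gamma b ^ (1 - θ) := by
  have hΓa := Gamma_pos_of_pos ha
  have hΓb := Gamma_pos_of_pos hb
  have hc : 0 < θ * a + (1 - θ) * b :=
    convex_Ioi (0 : ℝ) ha hb hθ0 (sub_nonneg.2 hθ1) (add_sub_cancel θ 1)
  rw [← log_le_log_iff (Gamma_pos_of_pos hc) (by positivity),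
    log_mul (by positivity) (by positivity), log_rpow hΓa, log_rpow hΓb]
  exact convexOn_log_Gamma.2 ha hb hθ0 (sub_nonneg.2 hθ1) (add_sub_cancel θ 1)

theorem Real.rpow_div_Gamma_geom_mean_le {x a b θ : ℝ} (hx : 0 < x) (ha : 0 < a) (hb : 0 < b)
    (hθ0 : 0 ≤ θ) (hθ1 : θ ≤ 1) :
    (x ^ a / Gamma a) ^ θ * (x ^ b / Gamma b) ^ (1 - θ) ≤
      x ^ (θ * a + (1 - θ) * b) / Gamma (θ * a + (1 - θ) * b) := by
  have hΓa := Gamma_pos_of_pos ha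
  have hΓb := Gamma_pos_of_pos hb
  have hc : 0 < θ * a + (1 - θ) * b :=
    convex_Ioi (0 : ℝ) ha hb hθ0 (sub_nonneg.2 hθ1) (add_sub_cancel θ 1)
  have hnum : x ^ (θ * a + (1 - θ) * b) = (x ^ a) ^ θ * (x ^ b) ^ (1 - θ) := by
    rw [rpow_add hx, ← rpow_mul hx.le, ← rpow_mul hx.le, mul_comm a, mul_comm b]
  rw [div_rpow (by positivity) hΓa.le, div_rpow (by positivity) hΓb.le, div_mul_div_comm, hnum]
  exact div_le_div_of_nonneg_left (by positivity) (Gamma_pos_of_pos hc)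
    (Gamma_le_rpow_mul_rpow ha hb hθ0 hθ1)

theorem Finset.prod_rpow_mul_prod_rpow_le {ι : Type*} (s : Finset ι) {f g h : ι → ℝ} {p q : ℝ}
    (hf : ∀ i ∈ s, 0 ≤ f i) (hg : ∀ i ∈ s, 0 ≤ g i)
    (hfgh : ∀ i ∈ s, f i ^ p * g i ^ q ≤ h i) :
    (∏ i ∈ s, f i) ^ p * (∏ i ∈ s, g i) ^ q ≤ ∏ i ∈ s, h i := by
  rw [← Real.finsetProd_rpow s f hf, ← Real.finsetProd_rpow s g hg, ← Finset.prod_mul_distrib]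
  exact Finset.prod_le_prod
    (fun i hi => mul_nonneg (rpow_nonneg (hf i hi) p) (rpow_nonneg (hg i hi) q)) hfgh

theorem prod_rpow_div_multiBeta {n : ℕ} (x α : Fin n → ℝ) :
    (∏ i, x i ^ α i) / multiBeta α = Gamma (∑ i, α i) * ∏ i, x i ^ α i / Gamma (α i) := by
  rw [multiBeta, Finset.prod_div_distrib, div_div_eq_mul_div, mul_comm, mul_div_assoc]

theorem dirichlet_density_logConcave_in_p_general (n : ℕ) (k : ℝ) (hk : 0 < k)
    (x : Fin n → ℝ) (hx : ∀ i, 0 < x i) :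
    ∀ u : Fin n → ℝ, ((∀ i, 0 < u i) ∧ ∑ i, u i = 1) →
    ∀ v : Fin n → ℝ, ((∀ i, 0 < v i) ∧ ∑ i, v i = 1) →
    ∀ θ : ℝ, θ ∈ Set.Icc (0:ℝ) 1 →
      ((∏ i, x i ^ (k * u i)) / multiBeta (fun i => k * u i)) ^ θ *
          ((∏ i, x i ^ (k * v i)) / multiBeta (fun i => k * v i)) ^ (1 - θ) ≤
        (∏ i, x i ^ (k * (θ • u + (1 - θ) • v) i)) /
          multiBeta (fun i => k * (θ • u + (1 - θ) • v) i) := by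
  rintro u ⟨hu, husum⟩ v ⟨hv, hvsum⟩ θ ⟨hθ0, hθ1⟩
  have hsum : ∀ p : Fin n → ℝ, ∑ i, p i = 1 → ∑ i, k * p i = k := fun p hp => by
    rw [← Finset.mul_sum, hp, mul_one]
  have hwsum : ∑ i, (θ • u + (1 - θ) • v) i = 1 := by
    simp only [Pi.add_apply, Pi.smul_apply, smul_eq_mul, Finset.sum_add_distrib, ← Finset.mul_sum,
      husum, hvsum]
    ring
  have hk_mul : ∀ i, k * (θ • u + (1 - θ) • v) i = θ * (k * u i) + (1 - θ) * (k * v i) :=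
    fun i => by simp only [Pi.add_apply, Pi.smul_apply, smul_eq_mul]; ring
  have hΓk := Gamma_pos_of_pos hk
  have hfactor_nonneg : ∀ p : Fin n → ℝ, (∀ i, 0 < p i) → ∀ i ∈ Finset.univ,
      0 ≤ x i ^ (k * p i) / Gamma (k * p i) := fun p hp i _ =>
    div_nonneg (rpow_nonneg (hx i).le _) (Gamma_pos_of_pos (mul_pos hk (hp i))).le
  rw [prod_rpow_div_multiBeta, prod_rpow_div_multiBeta, prod_rpow_div_multiBeta, hsum u husum,
    hsum v hvsum, hsum _ hwsum, mul_rpow hΓk.le (Finset.prod_nonneg (hfactor_nonneg u hu)),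
    mul_rpow hΓk.le (Finset.prod_nonneg (hfactor_nonneg v hv)), mul_mul_mul_comm,
    ← rpow_add hΓk, add_sub_cancel, rpow_one]
  gcongr
  refine Finset.prod_rpow_mul_prod_rpow_le _ (hfactor_nonneg u hu) (hfactor_nonneg v hv)
    fun i _ => ?_
  rw [hk_mul]
  exact rpow_div_Gamma_geom_mean_le (hx i) (mul_pos hk (hu i)) (mul_pos hk (hv i)) hθ0 hθ1

theorem dirichlet_density_logConcave_in_p (n : ℕ) (k : ℝ) (hk : 0 < k)
    (x : Fin n → ℝ) (hx : ∀ i, 0 < x i) (hxsum : ∑ i, x i = 1) :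
    ∀ u : Fin n → ℝ, ((∀ i, 0 < u i) ∧ ∑ i, u i = 1) →
    ∀ v : Fin n → ℝ, ((∀ i, 0 < v i) ∧ ∑ i, v i = 1) →
    ∀ θ : ℝ, θ ∈ Set.Icc (0:ℝ) 1 →
      ((∏ i, x i ^ (k * u i)) / multiBeta (fun i => k * u i)) ^ θ *
          ((∏ i, x i ^ (k * v i)) / multiBeta (fun i => k * v i)) ^ (1 - θ) ≤
        (∏ i, x i ^ (k * (θ • u + (1 - θ) • v) i)) /
          multiBeta (fun i => k * (θ • u + (1 - θ) • v) i) :=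
  dirichlet_density_logConcave_in_p_general n k hk x hx
end
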